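/- arXiv:1304.4288 — 6 statements merged into one kernel-verified Lean document; each statement's English description precedes it below -/
import Mathlib

section
/- Let Π := ∏_{n≥1}(1 − qⁿ) ∈ ℚ[[q]]. Then 12·θ(Π²) = (E₂ − 1)·Π² as formal power series. (This is the statement D₁(η²) = 0 for the Dedekind eta function η = q^{1/24}Π, after removing the fractional power q^{1/12} from η².) -/
/-- The theta operator `θ(f) = q·(df/dq)` on formal power series over `ℚ`. -/
noncomputable def theta (f : PowerSeries ℚ) : PowerSeries ℚ :=
  PowerSeries.mk fun n => (n : ℚ) * PowerSeries.coeff n f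

/-- The weight `2` Eisenstein series `E₂ = 1 − 24·∑_{n≥1} σ₁(n)·qⁿ` as a formal power series. -/
noncomputable def E2 : PowerSeries ℚ :=
  PowerSeries.mk fun n => if n = 0 then 1 else -24 * ∑ d ∈ n.divisors, (d : ℚ)

/-- `Φ` is the infinite product `∏_{n≥1}(1 − qⁿ)` in `ℚ[[q]]`, characterized by the fact
that its coefficients up to `q^N` agree with those of the finite product
`∏_{n=1}^{N}(1 − qⁿ)` for every `N` (the `n`-th factor is `≡ 1 mod qⁿ`). -/
def IsEulerProd (Φ : PowerSeries ℚ) : Prop :=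
  ∀ N k : ℕ, k ≤ N →
    PowerSeries.coeff k Φ =
      PowerSeries.coeff k (∏ n ∈ Finset.range N, (1 - (PowerSeries.X : PowerSeries ℚ) ^ (n + 1)))

/-! Since θ is a derivation, the logarithmic derivative of a product is the sum of the logarithmic
derivatives; from `θ(1 - qⁿ) = -n qⁿ` one gets `θ Π = -(∑ₙ n qⁿ / (1 - qⁿ)) Π`, and expanding the
Lambert series gives `∑ₙ n qⁿ / (1 - qⁿ) = ∑ₖ σ₁(k) qᵏ = (1 - E₂) / 24`. Hence
`12 θ(Π²) = 24 Π θ Π = (E₂ - 1) Π²`. The infinite product is only ever used modulo `q^(N+1)`,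
where it agrees with the finite product over `n ≤ N`. -/

open PowerSeries Finset

theorem Derivation.map_prod_of_map_eq_mul {R A ι : Type*} [CommSemiring R] [CommSemiring A]
    [Algebra R A] (D : Derivation R A A) (s : Finset ι) (f a : ι → A)
    (h : ∀ i ∈ s, D (f i) = a i * f i) :
    D (∏ i ∈ s, f i) = (∑ i ∈ s, a i) * ∏ i ∈ s, f i := by
  classical
  induction s using Finset.induction_on with
  | empty => simp
  | insert j s hj ih =>
    rw [prod_insert hj, sum_insert hj, Derivation.leibniz, smul_eq_mul, smul_eq_mul,
      ih fun i hi => h i (mem_insert_of_mem hi), h j (mem_insert_self j s)]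
    ring

/-- `X ^ m / (1 - X ^ m) = ∑_{j ≥ 1} X ^ (m * j)` -/
noncomputable def lambertTerm (R : Type*) [Semiring R] (m : ℕ) : R⟦X⟧ :=
  mk fun n => if m ∈ n.divisors then 1 else 0

section Lambert

variable {R : Type*}

@[simp]
theorem coeff_lambertTerm [Semiring R] (m n : ℕ) :
    coeff n (lambertTerm R m) = if m ∈ n.divisors then 1 else 0 :=
  coeff_mk _ _

theorem one_sub_X_pow_mul_lambertTerm [Ring R] {m : ℕ} (hm : 0 < m) :
    (1 - X ^ m) * lambertTerm R m = X ^ m := by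
  ext n
  rw [sub_mul, one_mul, map_sub, coeff_X_pow_mul', coeff_X_pow]
  rcases lt_or_ge n m with hnm | hmn
  · have : m ∉ n.divisors := fun h => hnm.not_ge (Nat.divisor_le h)
    simp [this, hnm.not_ge, hnm.ne]
  · obtain ⟨j, rfl⟩ := Nat.exists_eq_add_of_le hmn
    rcases j.eq_zero_or_pos with rfl | hj
    · simp [hm.ne']
    · simp [Nat.mem_divisors, Nat.dvd_add_self_left, hm.ne', hj.ne']

theorem coeff_sum_smul_lambertTerm [Semiring R] (f : ℕ → R) {N k : ℕ} (hk : k ≤ N) :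
    coeff k (∑ n ∈ range N, f (n + 1) • lambertTerm R (n + 1)) = ∑ d ∈ k.divisors, f d := by
  have hsub : k.divisors ⊆ range (N + 1) := fun d hd =>
    mem_range.2 (Nat.lt_succ_of_le ((Nat.divisor_le hd).trans hk))
  simp only [map_sum, coeff_smul, coeff_lambertTerm, smul_eq_mul, mul_ite, mul_one, mul_zero]
  calc ∑ n ∈ range N, (if n + 1 ∈ k.divisors then f (n + 1) else 0)
      = ∑ d ∈ range (N + 1), if d ∈ k.divisors then f d else 0 := by simp [sum_range_succ']
    _ = ∑ d ∈ k.divisors, f d := by rw [sum_ite_mem, inter_eq_right.2 hsub]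

end Lambert

noncomputable def thetaDerivation : Derivation ℚ ℚ⟦X⟧ ℚ⟦X⟧ :=
  (X : ℚ⟦X⟧) • d⁄dX ℚ

@[simp]
theorem coeff_theta (f : ℚ⟦X⟧) (n : ℕ) : coeff n (theta f) = n * coeff n f :=
  coeff_mk _ _

theorem thetaDerivation_apply (f : ℚ⟦X⟧) : thetaDerivation f = theta f := by
  ext (_ | n)
  · simp [thetaDerivation]
  · simp [thetaDerivation, coeff_succ_X_mul, coeff_derivative, mul_comm]

theorem theta_sub (f g : ℚ⟦X⟧) : theta (f - g) = theta f - theta g := by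
  simp only [← thetaDerivation_apply, map_sub]

theorem theta_pow (f : ℚ⟦X⟧) (n : ℕ) : theta (f ^ n) = n * f ^ (n - 1) * theta f := by
  simp only [← thetaDerivation_apply, Derivation.leibniz_pow, nsmul_eq_mul, smul_eq_mul, mul_assoc]

theorem X_pow_dvd_theta {n : ℕ} {f : ℚ⟦X⟧} (h : X ^ n ∣ f) : X ^ n ∣ theta f := by
  rw [X_pow_dvd_iff] at h ⊢
  intro m hm
  simp [h m hm]

theorem theta_one_sub_X_pow {m : ℕ} (hm : 0 < m) :
    theta (1 - X ^ m) = -((m : ℚ) • lambertTerm ℚ m) * (1 - X ^ m) := by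
  rw [neg_mul, smul_mul_assoc, mul_comm, one_sub_X_pow_mul_lambertTerm hm]
  ext n
  simp only [coeff_theta, map_sub, coeff_one, coeff_X_pow, map_neg, coeff_smul, smul_eq_mul]
  split_ifs <;> simp_all [hm.ne']

theorem theta_prod_one_sub_X_pow (N : ℕ) :
    theta (∏ n ∈ range N, (1 - X ^ (n + 1))) =
      -(∑ n ∈ range N, ((n + 1 : ℕ) : ℚ) • lambertTerm ℚ (n + 1)) *
        ∏ n ∈ range N, (1 - X ^ (n + 1)) := by
  rw [← thetaDerivation_apply, ← sum_neg_distrib]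
  exact thetaDerivation.map_prod_of_map_eq_mul _ _ _ fun n _ => by
    rw [thetaDerivation_apply, theta_one_sub_X_pow n.succ_pos]

noncomputable def sigmaOneSeries : ℚ⟦X⟧ :=
  mk fun n => ∑ d ∈ n.divisors, (d : ℚ)

theorem E2_sub_one : E2 - 1 = -24 * sigmaOneSeries := by
  rw [show (-24 : ℚ⟦X⟧) = C (-24) by rw [map_neg, map_ofNat]]
  ext (_ | n) <;> simp [E2, sigmaOneSeries, coeff_one]

theorem X_pow_succ_dvd_sigmaOneSeries_sub (N : ℕ) :
    X ^ (N + 1) ∣ sigmaOneSeries - ∑ n ∈ range N, ((n + 1 : ℕ) : ℚ) • lambertTerm ℚ (n + 1) := by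
  rw [X_pow_dvd_iff]
  intro k hk
  rw [map_sub, coeff_sum_smul_lambertTerm (fun d => (d : ℚ)) (Nat.le_of_lt_succ hk)]
  simp [sigmaOneSeries]

theorem IsEulerProd.X_pow_succ_dvd_sub {Φ : ℚ⟦X⟧} (hΦ : IsEulerProd Φ) (N : ℕ) :
    X ^ (N + 1) ∣ Φ - ∏ n ∈ range N, (1 - X ^ (n + 1)) := by
  rw [X_pow_dvd_iff]
  intro k hk
  rw [map_sub, hΦ N k (Nat.le_of_lt_succ hk), sub_self]

theorem IsEulerProd.theta_eq {Φ : ℚ⟦X⟧} (hΦ : IsEulerProd Φ) :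
    theta Φ = -(sigmaOneSeries * Φ) := by
  rw [eq_neg_iff_add_eq_zero]
  ext k
  set P := ∏ n ∈ range k, (1 - (X : ℚ⟦X⟧) ^ (n + 1))
  set L := ∑ n ∈ range k, ((n + 1 : ℕ) : ℚ) • lambertTerm ℚ (n + 1)
  have hsplit : theta Φ + sigmaOneSeries * Φ =
      theta (Φ - P) + sigmaOneSeries * (Φ - P) + (sigmaOneSeries - L) * P := by
    rw [theta_sub, theta_prod_one_sub_X_pow]
    ring
  have hdvd : X ^ (k + 1) ∣ theta Φ + sigmaOneSeries * Φ := by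
    have hΦP := hΦ.X_pow_succ_dvd_sub k
    rw [hsplit]
    exact dvd_add (dvd_add (X_pow_dvd_theta hΦP) (dvd_mul_of_dvd_right hΦP _))
      (dvd_mul_of_dvd_left (X_pow_succ_dvd_sigmaOneSeries_sub k) _)
  exact X_pow_dvd_iff.1 hdvd k k.lt_succ_self

/-- With `Π := ∏_{n≥1}(1 − qⁿ) ∈ ℚ[[q]]`, one has `12·θ(Π²) = (E₂ − 1)·Π²`: this is the
statement `D₁(η²) = 0` for the Dedekind eta function `η = q^{1/24}·Π`, after removing the
fractional power `q^{1/12}` from `η²`. -/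
theorem twelve_theta_sq_eq (Φ : PowerSeries ℚ) (hΦ : IsEulerProd Φ) :
    (12 : PowerSeries ℚ) * theta (Φ ^ 2) = (E2 - 1) * Φ ^ 2 := by
  rw [theta_pow, hΦ.theta_eq, E2_sub_one]
  ring
end

section
/- Let P, Q, n be integers with P ≥ 1, Q ≥ 6, gcd(P,Q) = 1 and n ≥ 1, and suppose p := Qn + P is prime. Then for every integer k with 0 ≤ k ≤ n − 1, p divides neither 12Qk + Q + 6P nor 12Qk + 5Q + 6P. -/
/-- If `P ≥ 1`, `Q ≥ 6`, `gcd(P,Q) = 1`, `n ≥ 1` and `p := Qn + P` is prime, then for every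
integer `k` with `0 ≤ k ≤ n − 1`, `p` divides neither `12Qk + Q + 6P` nor `12Qk + 5Q + 6P`. -/
theorem prime_not_dvd_numerator_factors (P Q n : ℤ) (hP : 1 ≤ P) (hQ : 6 ≤ Q)
    (hPQ : Int.gcd P Q = 1) (hn : 1 ≤ n) (hp : Prime (Q * n + P)) :
    ∀ k : ℤ, 0 ≤ k → k ≤ n - 1 →
      ¬ (Q * n + P ∣ 12 * Q * k + Q + 6 * P) ∧
      ¬ (Q * n + P ∣ 12 * Q * k + 5 * Q + 6 * P) := by
  intro k hk0 hk1
  have hQn : 6 * n ≤ Q * n := by nlinarith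
  have hpP : ¬ (Q * n + P ∣ P) := by
    intro h
    have := Int.le_of_dvd (by linarith) h
    nlinarith
  constructor <;> intro hdvd
  · have h1 : Q * n + P ∣ P * (6 * n - 12 * k - 1) := by
      have heq : P * (6 * n - 12 * k - 1)
          = n * (12 * Q * k + Q + 6 * P) - (12 * k + 1) * (Q * n + P) := by ring
      rw [heq]
      exact dvd_sub (hdvd.mul_left n) (dvd_mul_left _ _)
    have h2 : Q * n + P ∣ 6 * n - 12 * k - 1 := (hp.dvd_mul.mp h1).resolve_left hpP
    have hne : 6 * n - 12 * k - 1 ≠ 0 := by omega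
    have h3 := Int.le_of_dvd (abs_pos.mpr hne) ((dvd_abs _ _).mpr h2)
    have h4 : |6 * n - 12 * k - 1| ≤ 6 * n - 1 :=
      abs_le.mpr ⟨by linarith, by linarith⟩
    linarith
  · have h1 : Q * n + P ∣ P * (6 * n - 12 * k - 5) := by
      have heq : P * (6 * n - 12 * k - 5)
          = n * (12 * Q * k + 5 * Q + 6 * P) - (12 * k + 5) * (Q * n + P) := by ring
      rw [heq]
      exact dvd_sub (hdvd.mul_left n) (dvd_mul_left _ _)
    have h2 : Q * n + P ∣ 6 * n - 12 * k - 5 := (hp.dvd_mul.mp h1).resolve_left hpP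
    have hne : 6 * n - 12 * k - 5 ≠ 0 := by omega
    have h3 := Int.le_of_dvd (abs_pos.mpr hne) ((dvd_abs _ _).mpr h2)
    have h4 : |6 * n - 12 * k - 5| ≤ 6 * n - 1 :=
      abs_le.mpr ⟨by linarith, by linarith⟩
    linarith
end

section
/- Let P, Q, n be integers with P ≥ 1, Q ≥ 6, gcd(P,Q) = 1 and n ≥ 1, and suppose p := Qn + P is prime. Define C_n := (144Q)^{−n}·∏_{k=0}^{n−1} (12Qk + Q + 6P)(12Qk + 5Q + 6P) / ((Qk + Q + P)(k+1)) ∈ ℚ. Then the p-adic valuation of C_n equals −1. -/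
/-!
Write `p = Qn + P`. For `k < n` and `r ∈ {1, 5}` the numerator factors satisfy
`12Qk + rQ + 6P = Q(12k + r - 6n) + 6p`, where `12k + r - 6n` is odd, hence nonzero, and of
absolute value `< 6n < p`; since `p ∤ Q` (a common divisor of `p` and `Q` divides `P`), `p` divides
no numerator factor. In the denominator `0 < k + 1 ≤ n < p` and `0 < Q(k + 1) + P ≤ p`, with
equality only for `k = n - 1`. Finally `p ≥ 7` does not divide `144 Q`, so exactly one factor `p`
survives, in the denominator.
-/

open Finset

theorem padicValRat_finset_prod {p : ℕ} [Fact p.Prime] {ι : Type*} (s : Finset ι) (f : ι → ℚ)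
    (hf : ∀ i ∈ s, f i ≠ 0) : padicValRat p (∏ i ∈ s, f i) = ∑ i ∈ s, padicValRat p (f i) := by
  classical
  induction s using Finset.induction_on with
  | empty => simp
  | insert a s ha ih =>
    rw [prod_insert ha, sum_insert ha,
      padicValRat.mul (hf a (mem_insert_self a s))
        (prod_ne_zero_iff.2 fun i hi ↦ hf i (mem_insert_of_mem hi)),
      ih fun i hi ↦ hf i (mem_insert_of_mem hi)]

theorem padicValRat_intCast_mul_div {p : ℕ} [Fact p.Prime] {a b c d : ℤ} (ha : a ≠ 0)
    (hb : b ≠ 0) (hc : c ≠ 0) (hd : d ≠ 0) :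
    padicValRat p ((a : ℚ) * b / (c * d)) =
      padicValInt p a + padicValInt p b - (padicValInt p c + padicValInt p d) := by
  have cast_ne_zero {z : ℤ} (hz : z ≠ 0) : (z : ℚ) ≠ 0 := Int.cast_ne_zero.mpr hz
  rw [padicValRat.div (mul_ne_zero (cast_ne_zero ha) (cast_ne_zero hb))
      (mul_ne_zero (cast_ne_zero hc) (cast_ne_zero hd)),
    padicValRat.mul (cast_ne_zero ha) (cast_ne_zero hb),
    padicValRat.mul (cast_ne_zero hc) (cast_ne_zero hd)]
  simp only [padicValRat.of_int]

theorem Int.not_dvd_of_eq_mul_add_of_gcd_eq_one {p a b m : ℤ} (hp : 1 < p) (h : p = b * m + a)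
    (hab : Int.gcd a b = 1) : ¬ p ∣ b := by
  intro hb
  have ha : p ∣ a := by simpa [h] using dvd_sub (dvd_refl p) (hb.mul_right m)
  have := Int.le_of_dvd one_pos (hab ▸ Int.dvd_coe_gcd ha hb)
  omega

theorem Prime.not_dvd_mul_add_mul {p a m c : ℤ} (hp : Prime p) (ha : ¬ p ∣ a) (hm0 : m ≠ 0)
    (hm : |m| < p) : ¬ p ∣ a * m + p * c := by
  intro h
  rcases hp.dvd_or_dvd ((dvd_add_left (dvd_mul_right p c)).mp h) with hpa | hpm
  · exact ha hpa
  · exact hm0 (Int.eq_zero_of_abs_lt_dvd hpm hm)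

def CnFactor (P Q : ℤ) (k : ℕ) : ℚ :=
  ((12 * (Q : ℚ) * (k : ℚ) + (Q : ℚ) + 6 * (P : ℚ)) *
      (12 * (Q : ℚ) * (k : ℚ) + 5 * (Q : ℚ) + 6 * (P : ℚ))) /
    (((Q : ℚ) * (k : ℚ) + (Q : ℚ) + (P : ℚ)) * ((k : ℚ) + 1))

theorem CnFactor_pos {P Q : ℤ} (hP : 0 < P) (hQ : 0 < Q) (k : ℕ) : 0 < CnFactor P Q k := by
  have hP' : (0 : ℚ) < P := Int.cast_pos.mpr hP
  have hQ' : (0 : ℚ) < Q := Int.cast_pos.mpr hQ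
  unfold CnFactor
  positivity

section

variable {P Q : ℤ} {n p : ℕ}

theorem not_dvd_twelve_mul_add (hP : 1 ≤ P) (hQ : 6 ≤ Q) (hpeq : (p : ℤ) = Q * n + P)
    (hp : Prime (p : ℤ)) (hpQ : ¬ (p : ℤ) ∣ Q) {r : ℤ} (hr : Odd r) (hr0 : 0 ≤ r) (hr12 : r ≤ 12)
    {k : ℕ} (hk : k < n) : ¬ (p : ℤ) ∣ 12 * Q * k + r * Q + 6 * P := by
  have hQn : 6 * (n : ℤ) ≤ Q * n := by nlinarith
  have hkn : (k : ℤ) + 1 ≤ n := by exact_mod_cast hk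
  obtain ⟨t, rfl⟩ := hr
  have : 12 * Q * k + (2 * t + 1) * Q + 6 * P = Q * (12 * k + 2 * t + 1 - 6 * n) + p * 6 := by
    rw [hpeq]; ring
  rw [this]
  exact hp.not_dvd_mul_add_mul hpQ (by omega) (abs_lt.mpr ⟨by omega, by omega⟩)

theorem padicValInt_mul_add_add (hP : 0 < P) (hQ : 0 < Q) (hpeq : (p : ℤ) = Q * n + P)
    (hp : 1 < p) {k : ℕ} (hk : k < n) :
    padicValInt p (Q * k + Q + P) = if k = n - 1 then 1 else 0 := by
  split_ifs with hkn
  · have : Q * k + Q + P = p := by rw [hpeq, hkn, Nat.cast_pred (by omega)]; ring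
    rw [this, padicValInt.self hp]
  · have hkn : (k : ℤ) + 2 ≤ n := by omega
    apply padicValInt.eq_zero_of_not_dvd
    intro hdvd
    have := Int.le_of_dvd (by nlinarith) hdvd
    nlinarith

theorem padicValRat_CnFactor [Fact p.Prime] (hP : 1 ≤ P) (hQ : 6 ≤ Q)
    (hpeq : (p : ℤ) = Q * n + P) (hpQ : ¬ (p : ℤ) ∣ Q) {k : ℕ} (hk : k < n) :
    padicValRat p (CnFactor P Q k) = if k = n - 1 then -1 else 0 := by
  have hp : Prime (p : ℤ) := Nat.prime_iff_prime_int.mp Fact.out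
  have hA := not_dvd_twelve_mul_add hP hQ hpeq hp hpQ (r := 1) odd_one zero_le_one
    (by norm_num) hk
  have hB := not_dvd_twelve_mul_add hP hQ hpeq hp hpQ (r := 5) (by decide) (by norm_num)
    (by norm_num) hk
  have hE : ¬ (p : ℤ) ∣ k + 1 := by
    intro hdvd
    have := Int.le_of_dvd (by omega) hdvd
    nlinarith
  have ne_zero_of_not_dvd {z : ℤ} (hz : ¬ (p : ℤ) ∣ z) : z ≠ 0 := by
    rintro rfl; exact hz (dvd_zero _)
  have hCn : CnFactor P Q k =
      ((12 * Q * k + 1 * Q + 6 * P : ℤ) : ℚ) * (12 * Q * k + 5 * Q + 6 * P : ℤ) /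
        ((Q * k + Q + P : ℤ) * (k + 1 : ℤ)) := by
    unfold CnFactor; push_cast; ring
  rw [hCn, padicValRat_intCast_mul_div (ne_zero_of_not_dvd hA) (ne_zero_of_not_dvd hB)
      (by nlinarith) (ne_zero_of_not_dvd hE), padicValInt.eq_zero_of_not_dvd hA,
    padicValInt.eq_zero_of_not_dvd hB, padicValInt.eq_zero_of_not_dvd hE,
    padicValInt_mul_add_add (by omega) (by omega) hpeq (Fact.out : p.Prime).one_lt hk]
  split_ifs <;> rfl

end

/-- If `P ≥ 1`, `Q ≥ 6`, `gcd(P,Q) = 1`, `n ≥ 1` and `p := Qn + P` is prime, then the `p`-adic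
valuation of `C_n = (144Q)^{−n} ∏_{k=0}^{n−1} (12Qk+Q+6P)(12Qk+5Q+6P)/((Qk+Q+P)(k+1))`
is exactly `−1`. -/
theorem padicValRat_Cn_eq_neg_one (P Q : ℤ) (n : ℕ) (hP : 1 ≤ P) (hQ : 6 ≤ Q)
    (hPQ : Int.gcd P Q = 1) (hn : 1 ≤ n)
    (p : ℕ) (hp : p.Prime) (hpeq : (p : ℤ) = Q * (n : ℤ) + P) :
    padicValRat p
        (((144 * (Q : ℚ))⁻¹) ^ n *
          ∏ k ∈ Finset.range n,
            ((12 * (Q : ℚ) * (k : ℚ) + (Q : ℚ) + 6 * (P : ℚ)) *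
                (12 * (Q : ℚ) * (k : ℚ) + 5 * (Q : ℚ) + 6 * (P : ℚ))) /
              (((Q : ℚ) * (k : ℚ) + (Q : ℚ) + (P : ℚ)) * ((k : ℚ) + 1))) = -1 := by
  have := Fact.mk hp
  have hpQ : ¬ (p : ℤ) ∣ Q :=
    Int.not_dvd_of_eq_mul_add_of_gcd_eq_one (by exact_mod_cast hp.one_lt) hpeq hPQ
  have hp144 : ¬ (p : ℤ) ∣ 144 := by
    have : 7 ≤ p := by zify; nlinarith
    intro h
    have h : p ∣ 2 ^ 4 * 3 ^ 2 := by exact_mod_cast h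
    rcases (Nat.Prime.dvd_mul hp).1 h with h | h <;>
      have := Nat.le_of_dvd (by norm_num) (hp.dvd_of_dvd_pow h) <;> omega
  have h144Q : padicValRat p ((144 * (Q : ℚ))⁻¹ ^ n) = 0 := by
    have hpZ : Prime (p : ℤ) := Nat.prime_iff_prime_int.mp hp
    rw [padicValRat.pow, padicValRat.inv, ← Int.cast_ofNat, ← Int.cast_mul, padicValRat.of_int,
      padicValInt.eq_zero_of_not_dvd (fun h ↦ (hpZ.dvd_or_dvd h).elim hp144 hpQ)]
    simp
  have hQ' : (0 : ℚ) < Q := by exact_mod_cast (by omega : (0 : ℤ) < Q)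
  have hCn_ne : ∀ k ∈ range n, CnFactor P Q k ≠ 0 := fun k _ ↦
    (CnFactor_pos (by omega) (by omega) k).ne'
  change padicValRat p ((144 * (Q : ℚ))⁻¹ ^ n * ∏ k ∈ range n, CnFactor P Q k) = -1
  rw [padicValRat.mul (by positivity) (prod_ne_zero_iff.2 hCn_ne), h144Q, zero_add,
    padicValRat_finset_prod _ _ hCn_ne,
    sum_congr rfl fun k hk ↦ padicValRat_CnFactor hP hQ hpeq hpQ (mem_range.1 hk),
    sum_ite_eq' (range n) (n - 1) (fun _ ↦ (-1 : ℤ)), if_pos (mem_range.2 (by omega))]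
end

section
/- Let P, Q, n be integers with P ≥ 1, Q ≥ 6, gcd(P,Q) = 1 and n ≥ 1, and suppose p := Qn + P is prime. For m ≥ 1 define C_m := (144Q)^{−m}·∏_{k=0}^{m−1} (12Qk + Q + 6P)(12Qk + 5Q + 6P) / ((Qk + Q + P)(k+1)) ∈ ℚ. Then for every m with 1 ≤ m ≤ n − 1, the p-adic valuation of C_m is nonnegative (i.e., C_m is a p-adic integer). -/
/-! The denominator of `C_m`, cleared of fractions, is `(144Q)^m ∏_{k<m} (Qk + Q + P)(k + 1)`.
Since `p = Qn + P ≥ 7` and `k ≤ n - 2`, each of its factors `2`, `3`, `Q`, `Qk + Q + P` and `k + 1`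
is a positive integer smaller than `p`, so the prime `p` does not divide it. -/

open Finset

lemma padicValRat_intCast_div_nonneg {p : ℕ} [Fact p.Prime] (a : ℤ) {b : ℤ}
    (hb : ¬ (p : ℤ) ∣ b) : 0 ≤ padicValRat p (a / b) := by
  rcases eq_or_ne a 0 with rfl | ha
  · simp
  have hb0 : b ≠ 0 := by rintro rfl; exact hb (dvd_zero _)
  rw [padicValRat.div (Int.cast_ne_zero.2 ha) (Int.cast_ne_zero.2 hb0), padicValRat.of_int,
    padicValRat.of_int, padicValInt.eq_zero_of_not_dvd hb]
  simp

lemma Int.not_dvd_of_pos_of_lt {a b : ℤ} (ha : 0 < a) (hab : a < b) : ¬ b ∣ a :=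
  fun h => (Int.le_of_dvd ha h).not_gt hab

lemma Cm_eq_intCast_div (P Q : ℤ) (m : ℕ) :
    ((144 * (Q : ℚ))⁻¹) ^ m *
        ∏ k ∈ range m,
          ((12 * (Q : ℚ) * (k : ℚ) + (Q : ℚ) + 6 * (P : ℚ)) *
              (12 * (Q : ℚ) * (k : ℚ) + 5 * (Q : ℚ) + 6 * (P : ℚ))) /
            (((Q : ℚ) * (k : ℚ) + (Q : ℚ) + (P : ℚ)) * ((k : ℚ) + 1)) =
      ((∏ k ∈ range m, (12 * Q * k + Q + 6 * P) * (12 * Q * k + 5 * Q + 6 * P) : ℤ) : ℚ) /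
        (((144 * Q) ^ m * ∏ k ∈ range m, (Q * k + Q + P) * (k + 1) : ℤ) : ℚ) := by
  push_cast
  rw [prod_div_distrib, inv_pow, div_mul_eq_div_div_swap, inv_mul_eq_div]

theorem padicValRat_Cm_nonneg_general (P Q : ℤ) (n : ℕ) (hP : 1 ≤ P) (hQ : 6 ≤ Q)
    (p : ℕ) (hp : p.Prime) (hpeq : (p : ℤ) = Q * (n : ℤ) + P) :
    ∀ m : ℕ, 1 ≤ m → m ≤ n - 1 →
      0 ≤ padicValRat p
          (((144 * (Q : ℚ))⁻¹) ^ m *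
            ∏ k ∈ Finset.range m,
              ((12 * (Q : ℚ) * (k : ℚ) + (Q : ℚ) + 6 * (P : ℚ)) *
                  (12 * (Q : ℚ) * (k : ℚ) + 5 * (Q : ℚ) + 6 * (P : ℚ))) /
                (((Q : ℚ) * (k : ℚ) + (Q : ℚ) + (P : ℚ)) * ((k : ℚ) + 1))) := by
  intro m hm1 hmn
  have : Fact p.Prime := ⟨hp⟩
  have hp' : Prime (p : ℤ) := Nat.prime_iff_prime_int.mp hp
  have hn : (m : ℤ) + 1 ≤ n := by omega
  have hp7 : 7 ≤ (p : ℤ) := by nlinarith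
  have h144 : ¬ (p : ℤ) ∣ 144 := by
    rw [show (144 : ℤ) = 2 ^ 4 * 3 ^ 2 by norm_num, hp'.dvd_mul]
    rintro (h | h) <;> exact Int.not_dvd_of_pos_of_lt (by norm_num) (by omega) (hp'.dvd_of_dvd_pow h)
  have hQp : ¬ (p : ℤ) ∣ Q := Int.not_dvd_of_pos_of_lt (by omega) (by nlinarith)
  have hfactor : ∀ k ∈ range m, ¬ (p : ℤ) ∣ (Q * k + Q + P) * (k + 1) := by
    intro k hk
    have hk : (k : ℤ) + 1 ≤ m := by simp only [mem_range] at hk; omega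
    rw [hp'.dvd_mul, not_or]
    exact ⟨Int.not_dvd_of_pos_of_lt (by positivity) (by nlinarith),
      Int.not_dvd_of_pos_of_lt (by positivity) (by nlinarith)⟩
  rw [Cm_eq_intCast_div]
  refine padicValRat_intCast_div_nonneg _ ?_
  rw [hp'.dvd_mul, hp'.dvd_finsetProd_iff, not_or, not_exists]
  exact ⟨fun h => (hp'.dvd_mul.mp (hp'.dvd_of_dvd_pow h)).elim h144 hQp,
    fun k ⟨hk, h⟩ => hfactor k hk h⟩

/-- If `P ≥ 1`, `Q ≥ 6`, `gcd(P,Q) = 1`, `n ≥ 1` and `p := Qn + P` is prime, then for every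
`m` with `1 ≤ m ≤ n − 1`, the `p`-adic valuation of
`C_m = (144Q)^{−m} ∏_{k=0}^{m−1} (12Qk+Q+6P)(12Qk+5Q+6P)/((Qk+Q+P)(k+1))`
is nonnegative, i.e. `C_m` is a `p`-adic integer. -/
theorem padicValRat_Cm_nonneg (P Q : ℤ) (n : ℕ) (hP : 1 ≤ P) (hQ : 6 ≤ Q)
    (hPQ : Int.gcd P Q = 1) (hn : 1 ≤ n)
    (p : ℕ) (hp : p.Prime) (hpeq : (p : ℤ) = Q * (n : ℤ) + P) :
    ∀ m : ℕ, 1 ≤ m → m ≤ n - 1 →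
      0 ≤ padicValRat p
          (((144 * (Q : ℚ))⁻¹) ^ m *
            ∏ k ∈ Finset.range m,
              ((12 * (Q : ℚ) * (k : ℚ) + (Q : ℚ) + 6 * (P : ℚ)) *
                  (12 * (Q : ℚ) * (k : ℚ) + 5 * (Q : ℚ) + 6 * (P : ℚ))) /
                (((Q : ℚ) * (k : ℚ) + (Q : ℚ) + (P : ℚ)) * ((k : ℚ) + 1))) :=
  padicValRat_Cm_nonneg_general P Q n hP hQ p hp hpeq
end

section
/- Let p be a prime and N ≥ 1 an integer. Let h ∈ ℚ[[q]] be a formal power series with constant coefficient 0, such that every coefficient of h has nonnegative p-adic valuation and the coefficient of q¹ in h has p-adic valuation 0. Let γ : ℕ → ℚ satisfy: padicValRat p (γ_m) ≥ 0 for all 0 ≤ m < N (whenever γ_m ≠ 0), and γ_N ≠ 0 with padicValRat p (γ_N) = −1. Define g ∈ ℚ[[q]] by letting the coefficient of qⁿ in g be ∑_{m=0}^{n} γ_m · (coefficient of qⁿ in h^m) (a finite sum, since h has zero constant term). Then the coefficient of q^N in g has p-adic valuation exactly −1, and for every 0 ≤ m < N the coefficient of q^m in g has nonnegative p-adic valuation.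 -/
/-! The terms `γ_m h^m` with `m < N` have `p`-integral coefficients, since these form a subring
of `ℚ`. Because `h` has no constant term, the only remaining contribution to the coefficient of
`q^N` is `γ_N (h₁)^N`, of valuation `-1 + N · 0 = -1`, and adding a `p`-integral number to it
does not change that valuation. -/

open PowerSeries

namespace PowerSeries

variable {R : Type*}

theorem coeff_pow_mem_of_forall_coeff_mem [CommRing R] {T : Subring R} {φ : R⟦X⟧}
    (hφ : ∀ n, coeff n φ ∈ T) (m n : ℕ) : coeff n (φ ^ m) ∈ T := by
  rw [← map_toSubring φ T hφ, ← map_pow, coeff_map]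
  exact (coeff n (φ.toSubring T hφ ^ m)).2

theorem coeff_pow_self_of_constantCoeff_eq_zero [CommSemiring R] {φ : R⟦X⟧}
    (hφ : constantCoeff φ = 0) (n : ℕ) : coeff n (φ ^ n) = coeff 1 φ ^ n := by
  obtain ⟨ψ, rfl⟩ := X_dvd_iff.mpr hφ
  rw [mul_pow, coeff_X_pow_mul', if_pos le_rfl, Nat.sub_self, ← zero_add 1, coeff_succ_X_mul,
    coeff_zero_eq_constantCoeff_apply, coeff_zero_eq_constantCoeff_apply, map_pow]

end PowerSeries

namespace padicValRat

variable (p : ℕ) [Fact p.Prime]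

def integralSubring : Subring ℚ where
  carrier := {x | 0 ≤ padicValRat p x}
  zero_mem' := by simp
  one_mem' := by simp
  add_mem' {a b} ha hb := by
    by_cases hab : a + b = 0
    · simp [hab]
    · exact (le_min ha hb).trans (min_le_padicValRat_add hab)
  mul_mem' {a b} ha hb := by
    obtain rfl | ha0 := eq_or_ne a 0
    · simp
    obtain rfl | hb0 := eq_or_ne b 0
    · simp
    simpa [padicValRat.mul ha0 hb0] using add_nonneg ha hb
  neg_mem' {a} ha := by simpa using ha

variable {p}

theorem add_eq_of_nonneg_of_neg {a b : ℚ} (ha : 0 ≤ padicValRat p a)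
    (hb : padicValRat p b < 0) : padicValRat p (a + b) = padicValRat p b := by
  obtain rfl | ha0 := eq_or_ne a 0
  · rw [zero_add]
  have hb0 : b ≠ 0 := by rintro rfl; simp at hb
  have hab : a + b ≠ 0 := by
    rw [Ne, add_eq_zero_iff_eq_neg]
    rintro rfl
    rw [padicValRat.neg] at ha
    exact absurd ha hb.not_ge
  rw [add_comm] at hab ⊢
  exact add_eq_of_lt hab hb0 ha0 (hb.trans_le ha)

end padicValRat

theorem substitution_valuation_general (p : ℕ) (hp : p.Prime) (N : ℕ)
    (h : PowerSeries ℚ) (hconst : PowerSeries.constantCoeff h = 0)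
    (hcoeff : ∀ n : ℕ, 0 ≤ padicValRat p (PowerSeries.coeff n h))
    (h1ne : PowerSeries.coeff 1 h ≠ 0)
    (h1val : padicValRat p (PowerSeries.coeff 1 h) = 0)
    (γ : ℕ → ℚ) (hγ : ∀ m : ℕ, m < N → 0 ≤ padicValRat p (γ m))
    (hγN : γ N ≠ 0) (hγNval : padicValRat p (γ N) = -1)
    (g : PowerSeries ℚ)
    (hg : ∀ n : ℕ, PowerSeries.coeff n g =
      ∑ m ∈ Finset.range (n + 1), γ m * PowerSeries.coeff n (h ^ m)) :
    padicValRat p (PowerSeries.coeff N g) = -1 ∧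
      ∀ m : ℕ, m < N → 0 ≤ padicValRat p (PowerSeries.coeff m g) := by
  have : Fact p.Prime := ⟨hp⟩
  have hterm {m : ℕ} (hm : m < N) (n : ℕ) :
      γ m * coeff n (h ^ m) ∈ padicValRat.integralSubring p :=
    mul_mem (hγ m hm) (coeff_pow_mem_of_forall_coeff_mem hcoeff m n)
  have hlead : padicValRat p (γ N * coeff N (h ^ N)) = -1 := by
    rw [coeff_pow_self_of_constantCoeff_eq_zero hconst, padicValRat.mul hγN (pow_ne_zero _ h1ne),
      padicValRat.pow, h1val, hγNval, mul_zero, add_zero]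
  refine ⟨?_, fun m hm => ?_⟩
  · rw [hg, Finset.sum_range_succ, padicValRat.add_eq_of_nonneg_of_neg, hlead]
    · exact sum_mem fun m hm => hterm (Finset.mem_range.mp hm) N
    · rw [hlead]; norm_num
  · rw [hg]
    exact sum_mem fun k hk => hterm ((Finset.mem_range.mp hk).trans_le hm) m

/-- Substitution lemma: if `h ∈ ℚ[[q]]` has zero constant term, `p`-adically integral
coefficients and a `p`-adic unit as coefficient of `q¹`, and `γ : ℕ → ℚ` has `p`-adically
integral values `γ_m` for `m < N` while `γ_N ≠ 0` has `p`-adic valuation `−1`, then the power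
series `g` with `n`-th coefficient `∑_{m=0}^{n} γ_m·(coeff of qⁿ in h^m)` has coefficient of
`q^N` of `p`-adic valuation exactly `−1`, and all earlier coefficients are `p`-adically
integral. -/
theorem substitution_valuation (p : ℕ) (hp : p.Prime) (N : ℕ) (hN : 1 ≤ N)
    (h : PowerSeries ℚ) (hconst : PowerSeries.constantCoeff h = 0)
    (hcoeff : ∀ n : ℕ, 0 ≤ padicValRat p (PowerSeries.coeff n h))
    (h1ne : PowerSeries.coeff 1 h ≠ 0)
    (h1val : padicValRat p (PowerSeries.coeff 1 h) = 0)
    (γ : ℕ → ℚ) (hγ : ∀ m : ℕ, m < N → 0 ≤ padicValRat p (γ m))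
    (hγN : γ N ≠ 0) (hγNval : padicValRat p (γ N) = -1)
    (g : PowerSeries ℚ)
    (hg : ∀ n : ℕ, PowerSeries.coeff n g =
      ∑ m ∈ Finset.range (n + 1), γ m * PowerSeries.coeff n (h ^ m)) :
    padicValRat p (PowerSeries.coeff N g) = -1 ∧
      ∀ m : ℕ, m < N → 0 ≤ padicValRat p (PowerSeries.coeff m g) :=
  substitution_valuation_general p hp N h hconst hcoeff h1ne h1val γ hγ hγN hγNval g hg
end

section
/- Let P, Q be integers with P ≥ 1, Q ≥ 6, gcd(P,Q) = 1. For m ≥ 1 let C_m := (144Q)^{−m}·∏_{k=0}^{m−1} (12Qk + Q + 6P)(12Qk + 5Q + 6P) / ((Qk + Q + P)(k+1)) ∈ ℚ and C_0 := 1. Let u := 1728·q·(∏_{n≥1}(1 − qⁿ)²⁴)·(E₄)⁻³ ∈ ℚ[[q]] (the q-expansion of 1728/j, where j is the absolute modular invariant), and define g ∈ ℚ[[q]] by letting the coefficient of qⁿ in g be ∑_{m=0}^{n} C_m·(coefficient of qⁿ in u^m). Then for every integer n ≥ 1 such that p := Qn + P is prime: the coefficient of qⁿ in g has p-adic valuation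 exactly −1, and for every 0 ≤ m ≤ n − 1 the coefficient of q^m in g has nonnegative p-adic valuation. -/
/-!
The series `u = 1728 q ∏(1 - qⁿ)²⁴ / E₄³` has integer coefficients (`E₄` is integral with
constant term `1`, so `E₄⁻³` is integral too) and starts with `1728 q`, so every `coeff n (u^m)`
is an integer and `coeff n (uⁿ) = 1728ⁿ`. Write `C_m = ∏_{k<m} t_k` with
`t_k = (12Qk+Q+6P)(12Qk+5Q+6P) / (144Q(k+1)(Q(k+1)+P))`. For `k < n` every factor of `t_k`
other than `Q(k+1)+P` is a `p`-adic unit: `6P ≡ -6Qn (mod p)` turns the numerator factors into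
`Q` times odd integers of absolute value below `p`. Finally `Q(k+1)+P` is a unit for `k+1 < n`
and equals `p` for `k+1 = n`. Hence `C_m` is a `p`-adic unit for `m < n` while `|C_n|_p = p`,
so in `coeff n g` the single term `C_n · 1728ⁿ` dominates.
-/

/-- The weight `4` Eisenstein series `E₄ = 1 + 240·∑_{n≥1} σ₃(n)·qⁿ` as a formal power series. -/
noncomputable def E4 : PowerSeries ℚ :=
  PowerSeries.mk fun n => if n = 0 then 1 else 240 * ∑ d ∈ n.divisors, (d : ℚ) ^ 3

open PowerSeries Finset

namespace PowerSeries

theorem coeff_X_mul_pow_self {R : Type*} [CommSemiring R] (w : R⟦X⟧) (n : ℕ) :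
    coeff n ((X * w) ^ n) = constantCoeff w ^ n := by
  rw [mul_pow, coeff_X_pow_mul', if_pos le_rfl, Nat.sub_self, coeff_zero_eq_constantCoeff_apply,
    map_pow]

theorem inv_map_mem_range {R k : Type*} [CommRing R] [Field k] (f : R →+* k) {φ : R⟦X⟧}
    (h : IsUnit (constantCoeff φ)) : (map f φ)⁻¹ ∈ (map f).range := by
  obtain ⟨v, hv⟩ := h
  refine ⟨invOfUnit φ v, (eq_inv_iff_mul_eq_one ?_).2 ?_⟩
  · rw [← coeff_zero_eq_constantCoeff_apply, coeff_map, coeff_zero_eq_constantCoeff_apply, ← hv]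
    exact (v.map f.toMonoidHom).ne_zero
  · rw [← map_mul, invOfUnit_mul φ v hv.symm, map_one]

end PowerSeries

theorem E4_eq_map : E4 = map (Int.castRingHom ℚ)
    (mk fun n => if n = 0 then 1 else 240 * ∑ d ∈ n.divisors, (d : ℤ) ^ 3) := by
  ext n
  simp only [E4, coeff_mk, coeff_map, eq_intCast]
  split_ifs <;> push_cast <;> rfl

namespace IsEulerProd

variable {Φ : ℚ⟦X⟧}

theorem eq_map (hΦ : IsEulerProd Φ) : Φ = map (Int.castRingHom ℚ)
    (mk fun k => coeff k (∏ n ∈ range k, (1 - X ^ (n + 1) : ℤ⟦X⟧))) := by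
  ext k
  have hprod : map (Int.castRingHom ℚ) (∏ n ∈ range k, (1 - X ^ (n + 1) : ℤ⟦X⟧)) =
      ∏ n ∈ range k, (1 - X ^ (n + 1)) := by
    simp [map_prod]
  rw [hΦ k k le_rfl, coeff_map, coeff_mk, ← hprod, coeff_map]

theorem constantCoeff_eq_one (hΦ : IsEulerProd Φ) : constantCoeff Φ = 1 := by
  simp [← coeff_zero_eq_constantCoeff_apply, hΦ 0 0 le_rfl]

theorem jInv_mem_range_map (hΦ : IsEulerProd Φ) :
    C (1728 : ℚ) * X * Φ ^ 24 * (E4 ^ 3)⁻¹ ∈ (map (Int.castRingHom ℚ)).range := by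
  refine Subring.mul_mem _ (Subring.mul_mem _ (Subring.mul_mem _ ?_ ?_) ?_) ?_
  · exact ⟨C 1728, by rw [map_C, eq_intCast, Int.cast_ofNat]⟩
  · exact ⟨X, map_X _⟩
  · exact Subring.pow_mem _ (RingHom.mem_range.2 ⟨_, hΦ.eq_map.symm⟩) _
  · rw [E4_eq_map, ← map_pow]
    exact inv_map_mem_range _ (by simp)

theorem coeff_jInv_pow_self (hΦ : IsEulerProd Φ) (n : ℕ) :
    coeff n ((C (1728 : ℚ) * X * Φ ^ 24 * (E4 ^ 3)⁻¹) ^ n) = 1728 ^ n := by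
  have hE4 : constantCoeff E4 = 1 := by simp [← coeff_zero_eq_constantCoeff_apply, E4]
  rw [show C (1728 : ℚ) * X * Φ ^ 24 * (E4 ^ 3)⁻¹ = X * (C 1728 * Φ ^ 24 * (E4 ^ 3)⁻¹) by ring,
    coeff_X_mul_pow_self]
  simp [hΦ.constantCoeff_eq_one, hE4]

end IsEulerProd

section padicNorm

variable {p : ℕ} [Fact p.Prime]

theorem padicNorm_prod {ι : Type*} (s : Finset ι) (f : ι → ℚ) :
    padicNorm p (∏ i ∈ s, f i) = ∏ i ∈ s, padicNorm p (f i) :=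
  map_prod (IsAbsoluteValue.abvHom (padicNorm p)) f s

theorem padicNorm_intCast_eq_one_of_abs_lt {z : ℤ} (hz : z ≠ 0) (hzp : |z| < p) :
    padicNorm p z = 1 :=
  (padicNorm.int_eq_one_iff z).2 fun hd => hz (Int.eq_zero_of_abs_lt_dvd hd hzp)

theorem padicNorm_two_pow_mul_three_pow (hp : 3 < p) (a b : ℕ) :
    padicNorm p (2 ^ a * 3 ^ b) = 1 := by
  have h2 : padicNorm p 2 = 1 := by
    exact_mod_cast padicNorm_intCast_eq_one_of_abs_lt (p := p) (z := 2) two_ne_zero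
      (by norm_num; omega)
  have h3 : padicNorm p 3 = 1 := by
    exact_mod_cast padicNorm_intCast_eq_one_of_abs_lt (p := p) (z := 3) three_ne_zero
      (by norm_num; omega)
  rw [padicNorm.mul, IsAbsoluteValue.abv_pow (padicNorm p), IsAbsoluteValue.abv_pow (padicNorm p),
    h2, h3, one_pow, one_pow, one_mul]

theorem padicNorm_add_mul_self {x : ℚ} (hx : padicNorm p x = 1) (c : ℤ) :
    padicNorm p (x + c * p) = 1 := by
  have hcp : padicNorm p (c * p) < 1 := by
    exact_mod_cast (padicNorm.int_lt_one_iff (c * p)).2 (dvd_mul_left _ _)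
  rw [padicNorm.add_eq_max_of_ne (hx ▸ hcp.ne'), hx, max_eq_left hcp.le]

theorem padicValRat_nonneg_of_padicNorm_le_one {x : ℚ} (hx : padicNorm p x ≤ 1) :
    0 ≤ padicValRat p x := by
  rcases eq_or_ne x 0 with rfl | hx0
  · simp
  rw [padicNorm.eq_zpow_of_nonzero hx0,
    zpow_le_one_iff_right₀ (by exact_mod_cast (Fact.out : p.Prime).one_lt)] at hx
  omega

theorem padicValRat_eq_neg_one_of_padicNorm_eq {x : ℚ} (hx : padicNorm p x = p) :
    padicValRat p x = -1 := by
  have hp := (Fact.out : p.Prime)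
  have hx0 : x ≠ 0 := by
    rintro rfl
    exact hp.ne_zero (by exact_mod_cast hx.symm.trans padicNorm.zero)
  rw [padicNorm.eq_zpow_of_nonzero hx0] at hx
  have := zpow_right_injective₀ (a := (p : ℚ)) (by exact_mod_cast hp.pos)
    (by exact_mod_cast hp.ne_one) (hx.trans (zpow_one _).symm)
  omega

theorem padicValRat_add_eq_neg_one {x y : ℚ} (hx : padicNorm p x ≤ 1) (hy : padicNorm p y = p) :
    padicValRat p (x + y) = -1 := by
  have hlt : padicNorm p x < padicNorm p y :=
    hy ▸ hx.trans_lt (by exact_mod_cast (Fact.out : p.Prime).one_lt)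
  apply padicValRat_eq_neg_one_of_padicNorm_eq
  rw [padicNorm.add_eq_max_of_ne hlt.ne, max_eq_right hlt.le, hy]

end padicNorm

def hypFactor (P Q : ℚ) (k : ℕ) : ℚ :=
  (12 * Q * k + Q + 6 * P) * (12 * Q * k + 5 * Q + 6 * P) /
    (144 * Q * (k + 1) * (Q * (k + 1) + P))

theorem prod_hypFactor (P Q : ℚ) (m : ℕ) :
    (144 * Q)⁻¹ ^ m * ∏ k ∈ range m,
      (12 * Q * k + Q + 6 * P) * (12 * Q * k + 5 * Q + 6 * P) / ((Q * k + Q + P) * (k + 1)) =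
      ∏ k ∈ range m, hypFactor P Q k := by
  nth_rw 1 [← card_range m]
  rw [pow_card_mul_prod]
  refine prod_congr rfl fun k _ => ?_
  simp only [hypFactor, div_eq_mul_inv, mul_inv]
  ring

section hypFactor

variable {P Q : ℤ} {n p : ℕ}

theorem lt_of_eq_mul_add (hP : 1 ≤ P) (hQ : 6 ≤ Q) (hpn : (p : ℤ) = Q * n + P) (hn : 1 ≤ n) :
    Q < p ∧ 6 * n < (p : ℤ) := by
  have : 6 * (n : ℤ) ≤ Q * n := mul_le_mul_of_nonneg_right hQ n.cast_nonneg
  constructor <;> nlinarith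

variable [Fact p.Prime]

theorem padicNorm_hypFactor (hP : 1 ≤ P) (hQ : 6 ≤ Q) (hpn : (p : ℤ) = Q * n + P) {k : ℕ}
    (hk : k < n) : padicNorm p (hypFactor P Q k) = (padicNorm p (Q * (k + 1) + P : ℤ))⁻¹ := by
  obtain ⟨hQp, hnp⟩ := lt_of_eq_mul_add hP hQ hpn (by omega)
  have hQ1 : padicNorm p Q = 1 :=
    padicNorm_intCast_eq_one_of_abs_lt (by omega) (abs_lt.2 ⟨by omega, hQp⟩)
  have hk1 : padicNorm p ((k : ℚ) + 1) = 1 := by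
    exact_mod_cast padicNorm_intCast_eq_one_of_abs_lt (p := p) (z := k + 1) (by omega)
      (abs_lt.2 ⟨by omega, by omega⟩)
  -- `12Qk + Q + 6P = Q(12k + 1 - 6n) + 6p`, and likewise for `12Qk + 5Q + 6P`.
  have hnum (c : ℤ) (hc : c ≠ 0) (hcn : |c| < 6 * n) : padicNorm p (Q * c + 6 * p) = 1 := by
    have hc1 : padicNorm p c = 1 := padicNorm_intCast_eq_one_of_abs_lt hc (by omega)
    exact_mod_cast padicNorm_add_mul_self (p := p) (x := Q * c)
      (by rw [padicNorm.mul, hQ1, hc1, one_mul]) 6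
  have hpq : (p : ℚ) = Q * n + P := by exact_mod_cast hpn
  have ha : padicNorm p (12 * Q * k + Q + 6 * P) = 1 := by
    rw [← hnum (12 * k + 1 - 6 * n) (by omega) (abs_lt.2 ⟨by omega, by omega⟩)]
    congr 1; push_cast; linear_combination -6 * hpq
  have hb : padicNorm p (12 * Q * k + 5 * Q + 6 * P) = 1 := by
    rw [← hnum (12 * k + 5 - 6 * n) (by omega) (abs_lt.2 ⟨by omega, by omega⟩)]
    congr 1; push_cast; linear_combination -6 * hpq
  have h144 : padicNorm p 144 = 1 := by
    rw [show (144 : ℚ) = 2 ^ 4 * 3 ^ 2 by norm_num]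
    exact padicNorm_two_pow_mul_three_pow (by omega) 4 2
  simp only [hypFactor, padicNorm.div, padicNorm.mul, ha, hb, h144, hQ1, hk1]
  push_cast
  ring

theorem padicNorm_prod_hypFactor_of_lt (hP : 1 ≤ P) (hQ : 6 ≤ Q) (hpn : (p : ℤ) = Q * n + P)
    {m : ℕ} (hm : m < n) : padicNorm p (∏ k ∈ range m, hypFactor P Q k) = 1 := by
  rw [padicNorm_prod]
  refine prod_eq_one fun k hk => ?_
  have hk : k + 1 < n := by rw [mem_range] at hk; omega
  have hQk : Q * (k + 1) < Q * n := mul_lt_mul_of_pos_left (by exact_mod_cast hk) (by omega)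
  have : 0 ≤ Q * k := mul_nonneg (by omega) k.cast_nonneg
  rw [padicNorm_hypFactor hP hQ hpn (by omega),
    padicNorm_intCast_eq_one_of_abs_lt (by nlinarith) (abs_lt.2 ⟨by nlinarith, by omega⟩), inv_one]

theorem padicNorm_prod_hypFactor_self (hP : 1 ≤ P) (hQ : 6 ≤ Q) (hpn : (p : ℤ) = Q * n + P)
    (hn : 1 ≤ n) : padicNorm p (∏ k ∈ range n, hypFactor P Q k) = p := by
  obtain ⟨k, rfl⟩ : ∃ k, n = k + 1 := ⟨n - 1, by omega⟩
  have hlast : ((Q * (k + 1) + P : ℤ) : ℚ) = p := by push_cast at hpn ⊢; exact_mod_cast hpn.symm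
  rw [prod_range_succ, padicNorm.mul, padicNorm_prod_hypFactor_of_lt hP hQ hpn (lt_add_one k),
    padicNorm_hypFactor hP hQ hpn (lt_add_one k), hlast, padicNorm.padicNorm_p_of_prime, inv_inv,
    one_mul]

end hypFactor

theorem hypergeometric_in_q_valuation_general (P Q : ℤ) (hP : 1 ≤ P) (hQ : 6 ≤ Q)
    (C : ℕ → ℚ) (hC0 : C 0 = 1)
    (hC : ∀ m : ℕ, 1 ≤ m → C m =
      ((144 * (Q : ℚ))⁻¹) ^ m *
        ∏ k ∈ Finset.range m,
          ((12 * (Q : ℚ) * (k : ℚ) + (Q : ℚ) + 6 * (P : ℚ)) *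
              (12 * (Q : ℚ) * (k : ℚ) + 5 * (Q : ℚ) + 6 * (P : ℚ))) /
            (((Q : ℚ) * (k : ℚ) + (Q : ℚ) + (P : ℚ)) * ((k : ℚ) + 1)))
    (Φ : PowerSeries ℚ) (hΦ : IsEulerProd Φ)
    (u : PowerSeries ℚ)
    (hu : u = PowerSeries.C (1728 : ℚ) * PowerSeries.X * Φ ^ 24 * (E4 ^ 3)⁻¹)
    (g : PowerSeries ℚ)
    (hg : ∀ n : ℕ, PowerSeries.coeff n g =
      ∑ m ∈ Finset.range (n + 1), C m * PowerSeries.coeff n (u ^ m)) :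
    ∀ n : ℕ, 1 ≤ n → ∀ p : ℕ, p.Prime → (p : ℤ) = Q * (n : ℤ) + P →
      padicValRat p (PowerSeries.coeff n g) = -1 ∧
        ∀ m : ℕ, m < n → 0 ≤ padicValRat p (PowerSeries.coeff m g) := by
  intro n hn p hp hpn
  have := Fact.mk hp
  have hC_eq (m : ℕ) : C m = ∏ k ∈ range m, hypFactor P Q k := by
    rcases Nat.eq_zero_or_pos m with rfl | hm
    · simp [hC0]
    · rw [hC m hm, prod_hypFactor]
  obtain ⟨U, hU⟩ := hu ▸ hΦ.jInv_mem_range_map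
  have hterm (k m : ℕ) (hm : m < n) : padicNorm p (C m * coeff k (u ^ m)) ≤ 1 := by
    rw [padicNorm.mul, hC_eq, padicNorm_prod_hypFactor_of_lt hP hQ hpn hm, one_mul, ← hU,
      ← map_pow, coeff_map]
    exact padicNorm.of_int _
  refine ⟨?_, fun m hm => ?_⟩
  · have hp3 : 3 < p := by have := (lt_of_eq_mul_add hP hQ hpn hn).2; omega
    rw [hg, sum_range_succ, hu, hΦ.coeff_jInv_pow_self, ← hu]
    refine padicValRat_add_eq_neg_one
      (padicNorm.sum_le' (fun m hm => hterm n m (mem_range.1 hm)) zero_le_one) ?_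
    have h1728 : (1728 : ℚ) ^ n = 2 ^ (6 * n) * 3 ^ (3 * n) := by
      rw [pow_mul, pow_mul, ← mul_pow]; norm_num
    rw [padicNorm.mul, hC_eq, padicNorm_prod_hypFactor_self hP hQ hpn hn, h1728,
      padicNorm_two_pow_mul_three_pow hp3, mul_one]
  · apply padicValRat_nonneg_of_padicNorm_le_one
    rw [hg]
    exact padicNorm.sum_le' (fun j hj => hterm m j (by rw [mem_range] at hj; omega)) zero_le_one

/-- Let `P ≥ 1`, `Q ≥ 6`, `gcd(P,Q) = 1`.  Let `C_0 = 1` and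
`C_m = (144Q)^{−m} ∏_{k=0}^{m−1} (12Qk+Q+6P)(12Qk+5Q+6P)/((Qk+Q+P)(k+1))` for `m ≥ 1`.
Let `u = 1728·q·(∏_{n≥1}(1−qⁿ)²⁴)·E₄⁻³ ∈ ℚ[[q]]` (the `q`-expansion of `1728/j`) and let `g`
be the power series whose `n`-th coefficient is `∑_{m=0}^{n} C_m·(coeff of qⁿ in u^m)`.
Then for every `n ≥ 1` such that `p := Qn + P` is prime, the `n`-th coefficient of `g` has
`p`-adic valuation exactly `−1`, and the earlier coefficients are `p`-adically integral. -/
theorem hypergeometric_in_q_valuation (P Q : ℤ) (hP : 1 ≤ P) (hQ : 6 ≤ Q)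
    (hPQ : Int.gcd P Q = 1)
    (C : ℕ → ℚ) (hC0 : C 0 = 1)
    (hC : ∀ m : ℕ, 1 ≤ m → C m =
      ((144 * (Q : ℚ))⁻¹) ^ m *
        ∏ k ∈ Finset.range m,
          ((12 * (Q : ℚ) * (k : ℚ) + (Q : ℚ) + 6 * (P : ℚ)) *
              (12 * (Q : ℚ) * (k : ℚ) + 5 * (Q : ℚ) + 6 * (P : ℚ))) /
            (((Q : ℚ) * (k : ℚ) + (Q : ℚ) + (P : ℚ)) * ((k : ℚ) + 1)))
    (Φ : PowerSeries ℚ) (hΦ : IsEulerProd Φ)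
    (u : PowerSeries ℚ)
    (hu : u = PowerSeries.C (1728 : ℚ) * PowerSeries.X * Φ ^ 24 * (E4 ^ 3)⁻¹)
    (g : PowerSeries ℚ)
    (hg : ∀ n : ℕ, PowerSeries.coeff n g =
      ∑ m ∈ Finset.range (n + 1), C m * PowerSeries.coeff n (u ^ m)) :
    ∀ n : ℕ, 1 ≤ n → ∀ p : ℕ, p.Prime → (p : ℤ) = Q * (n : ℤ) + P →
      padicValRat p (PowerSeries.coeff n g) = -1 ∧
        ∀ m : ℕ, m < n → 0 ≤ padicValRat p (PowerSeries.coeff m g) :=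
  hypergeometric_in_q_valuation_general P Q hP hQ C hC0 hC Φ hΦ u hu g hg
end
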